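/- Theorem 2(c) (uniqueness of the global minimizer): If ρ is a loss function that is bounded below and continuous on [0,∞), a ≠ 0, and in addition ρ is strictly geodesically convex (i.e., x ↦ ρ(exp x) is strictly convex on ℝ), then the conditional objective 𝓛 has a unique global minimizer on [0,∞). -/

import Mathlib

open Matrix ComplexOrder

noncomputable section

/-- The covariance matrix `Σ(γ) = Σ₀ + γ·a aᴴ`. -/
def Sig {L : ℕ} (S0 : Matrix (Fin L) (Fin L) ℂ) (a : Fin L → ℂ) (γ : ℝ) :
    Matrix (Fin L) (Fin L) ℂ :=
  S0 + (γ : ℂ) • vecMulVec a (star a)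

/-- The squared Mahalanobis distance `s(γ) = yᴴ Σ(γ)⁻¹ y` (a real number). -/
def mdist {L : ℕ} (S0 : Matrix (Fin L) (Fin L) ℂ) (a : Fin L → ℂ) (y : Fin L → ℂ)
    (γ : ℝ) : ℝ :=
  (star y ⬝ᵥ (Sig S0 a γ)⁻¹ *ᵥ y).re

/-- The conditional objective `𝓛(γ) = (1/(bM)) Σₘ ρ(sₘ(γ)) + log det Σ(γ)`. -/
def obj {L M : ℕ} (S0 : Matrix (Fin L) (Fin L) ℂ) (a : Fin L → ℂ)
    (y : Fin M → Fin L → ℂ) (b : ℝ) (ρ : ℝ → ℝ) (γ : ℝ) : ℝ :=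
  (1 / (b * M)) * ∑ m, ρ (mdist S0 a (y m) γ) + Real.log ((Sig S0 a γ).det.re)

variable {L : ℕ}

lemma vmv_mulVec (u v x : Fin L → ℂ) : vecMulVec u v *ᵥ x = (v ⬝ᵥ x) • u := by
  ext i
  simp [mulVec, dotProduct, vecMulVec_apply, Finset.mul_sum, mul_comm, mul_left_comm]

lemma mul_vmv (M : Matrix (Fin L) (Fin L) ℂ) (u v : Fin L → ℂ) :
    M * vecMulVec u v = vecMulVec (M *ᵥ u) v := by
  ext i j
  simp [mul_apply, vecMulVec_apply, mulVec, dotProduct, Finset.sum_mul, mul_assoc]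

lemma vmv_mul (u v : Fin L → ℂ) (M : Matrix (Fin L) (Fin L) ℂ) :
    vecMulVec u v * M = vecMulVec u (v ᵥ* M) := by
  ext i j
  simp [mul_apply, vecMulVec_apply, vecMul, dotProduct, Finset.mul_sum, mul_assoc]

lemma vmv_posSemidef (a : Fin L → ℂ) {γ : ℝ} (hγ : 0 ≤ γ) :
    ((γ : ℂ) • vecMulVec a (star a)).PosSemidef := by
  rw [posSemidef_iff_dotProduct_mulVec]
  constructor
  · ext i j
    simp [conjTranspose_apply, vecMulVec_apply, mul_comm, Complex.conj_ofReal, mul_left_comm,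
      mul_assoc]
  · intro x
    rw [smul_mulVec, vmv_mulVec, dotProduct_smul, dotProduct_smul]
    have h1 : (0:ℂ) ≤ (γ:ℂ) := by
      rw [Complex.le_def]; simp [hγ]
    have h2 : (0:ℂ) ≤ star a ⬝ᵥ x * (star x ⬝ᵥ a) := by
      have : star x ⬝ᵥ a = star (star a ⬝ᵥ x) := by
        rw [← star_dotProduct_star, star_star]
      rw [this]
      exact mul_star_self_nonneg _
    simpa [smul_eq_mul, mul_comm] using mul_nonneg h1 h2

variable {S0 : Matrix (Fin L) (Fin L) ℂ} {a : Fin L → ℂ}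

lemma sig_posDef (hS0 : S0.PosDef) {γ : ℝ} (hγ : 0 ≤ γ) : (Sig S0 a γ).PosDef :=
  hS0.add_posSemidef (vmv_posSemidef a hγ)

lemma sig_det (hS0 : S0.PosDef) (γ : ℝ) :
    (Sig S0 a γ).det = S0.det * (1 + (γ:ℂ) * (star a ⬝ᵥ S0⁻¹ *ᵥ a)) := by
  have h : Sig S0 a γ = S0 + replicateCol Unit ((γ:ℂ) • a) * replicateRow Unit (star a) := by
    rw [Sig]
    congr 1
    rw [← vecMulVec_eq Unit]
    ext i j
    simp [vecMulVec_apply, mul_assoc]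
  rw [h, det_add_replicateCol_mul_replicateRow (isUnit_iff_isUnit_det _ |>.1 hS0.isUnit)]
  congr 1
  have h2 : S0⁻¹ * replicateCol Unit ((γ:ℂ) • a) = replicateCol Unit (S0⁻¹ *ᵥ ((γ:ℂ) • a)) := by
    rw [replicateCol_mulVec]
  rw [Matrix.mul_assoc, h2, det_unique, Matrix.add_apply, Matrix.one_apply_eq,
    replicateRow_mul_replicateCol_apply]
  simp [mulVec_smul, dotProduct_smul]

lemma herm_dot_real {H : Matrix (Fin L) (Fin L) ℂ} (hH : H.IsHermitian) (x : Fin L → ℂ) :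
    star x ⬝ᵥ H *ᵥ x = (((star x ⬝ᵥ H *ᵥ x).re : ℝ) : ℂ) := by
  have hs : star (star x ⬝ᵥ H *ᵥ x) = star x ⬝ᵥ H *ᵥ x := by
    rw [← star_dotProduct_star, star_star, star_mulVec, ← dotProduct_mulVec, hH.eq]
  exact ((Complex.conj_eq_iff_re).mp hs).symm

lemma herm_dot_cross {H : Matrix (Fin L) (Fin L) ℂ} (hH : H.IsHermitian) (x z : Fin L → ℂ) :
    star x ⬝ᵥ H *ᵥ z = star (star z ⬝ᵥ H *ᵥ x) := by
  rw [← star_dotProduct_star, star_star, star_mulVec, ← dotProduct_mulVec, hH.eq]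

lemma vmv_mul_vmv (u v w x : Fin L → ℂ) :
    vecMulVec u v * vecMulVec w x = (v ⬝ᵥ w) • vecMulVec u x := by
  ext i j
  simp [mul_apply, vecMulVec_apply, dotProduct, Finset.mul_sum, Finset.sum_mul]
  congr 1
  ext k
  ring

lemma creal_pos (hS0 : S0.PosDef) (ha : a ≠ 0) : 0 < (star a ⬝ᵥ S0⁻¹ *ᵥ a).re :=
  hS0.inv.re_dotProduct_pos ha

lemma creal_nonneg (hS0 : S0.PosDef) : 0 ≤ (star a ⬝ᵥ S0⁻¹ *ᵥ a).re :=
  hS0.inv.posSemidef.re_dotProduct_nonneg a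

lemma one_add_pos (hS0 : S0.PosDef) {γ : ℝ} (hγ : 0 ≤ γ) :
    0 < 1 + γ * (star a ⬝ᵥ S0⁻¹ *ᵥ a).re := by
  have := creal_nonneg (a := a) hS0
  nlinarith

lemma sig_inv (hS0 : S0.PosDef) {γ : ℝ} (hγ : 0 ≤ γ) :
    (Sig S0 a γ)⁻¹ = S0⁻¹ - ((γ / (1 + γ * (star a ⬝ᵥ S0⁻¹ *ᵥ a).re) : ℝ) : ℂ) •
      (S0⁻¹ * vecMulVec a (star a) * S0⁻¹) := by
  set c : ℝ := (star a ⬝ᵥ S0⁻¹ *ᵥ a).re with hc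
  set k : ℝ := γ / (1 + γ * c) with hk
  have hC : star a ⬝ᵥ S0⁻¹ *ᵥ a = (c : ℂ) := herm_dot_real hS0.inv.isHermitian a
  have h1 : (0:ℝ) < 1 + γ * c := one_add_pos hS0 hγ
  apply inv_eq_right_inv
  set W := vecMulVec a (star a) with hW
  have hWW : W * S0⁻¹ * W = (c : ℂ) • W := by
    rw [hW, vmv_mul, vmv_mul_vmv, ← dotProduct_mulVec, hC]
  have hS0inv : S0 * S0⁻¹ = 1 := mul_nonsing_inv _ (isUnit_iff_isUnit_det _ |>.1 hS0.isUnit)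
  have expand : (S0 + (γ:ℂ) • W) * (S0⁻¹ - (k:ℂ) • (S0⁻¹ * W * S0⁻¹)) =
      1 + ((γ:ℂ) - (k:ℂ) - (γ:ℂ) * (k:ℂ) * (c:ℂ)) • (W * S0⁻¹) := by
    have e1 : S0 * (S0⁻¹ * W * S0⁻¹) = W * S0⁻¹ := by
      rw [← Matrix.mul_assoc, ← Matrix.mul_assoc, hS0inv, Matrix.one_mul]
    have e2 : W * (S0⁻¹ * W * S0⁻¹) = (c:ℂ) • (W * S0⁻¹) := by
      rw [← Matrix.mul_assoc, ← Matrix.mul_assoc, hWW, Matrix.smul_mul]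
    rw [Matrix.mul_sub, Matrix.add_mul, Matrix.add_mul, hS0inv, Matrix.smul_mul,
      Matrix.smul_mul, Matrix.mul_smul, Matrix.mul_smul, e1, e2, smul_smul, smul_smul]
    module
  have hcoef : (γ:ℂ) - (k:ℂ) - (γ:ℂ) * (k:ℂ) * (c:ℂ) = 0 := by
    have : (k:ℝ) * (1 + γ * c) = γ := by
      rw [hk]; field_simp
    have h2 : γ - k - γ * k * c = 0 := by nlinarith [this]
    have := congrArg (fun x : ℝ => (x : ℂ)) h2
    push_cast at this
    linear_combination this
  rw [show Sig S0 a γ = S0 + (γ:ℂ) • W from rfl, expand, hcoef, zero_smul, add_zero]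

lemma mdist_eq (hS0 : S0.PosDef) (y : Fin L → ℂ) {γ : ℝ} (hγ : 0 ≤ γ) :
    mdist S0 a y γ = (star y ⬝ᵥ S0⁻¹ *ᵥ y).re -
      γ / (1 + γ * (star a ⬝ᵥ S0⁻¹ *ᵥ a).re) * Complex.normSq (star a ⬝ᵥ S0⁻¹ *ᵥ y) := by
  set c : ℝ := (star a ⬝ᵥ S0⁻¹ *ᵥ a).re with hc
  set k : ℝ := γ / (1 + γ * c) with hk
  set d : ℂ := star a ⬝ᵥ S0⁻¹ *ᵥ y with hd
  rw [mdist, sig_inv hS0 hγ]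
  have h2 : (S0⁻¹ * vecMulVec a (star a) * S0⁻¹) *ᵥ y = S0⁻¹ *ᵥ (d • a) := by
    rw [Matrix.mul_assoc, ← mulVec_mulVec, ← mulVec_mulVec, vmv_mulVec, ← hd]
  have h3 : star y ⬝ᵥ (S0⁻¹ * vecMulVec a (star a) * S0⁻¹) *ᵥ y = d * star d := by
    rw [h2, mulVec_smul, dotProduct_smul, herm_dot_cross hS0.inv.isHermitian y a, ← hd,
      smul_eq_mul]
  rw [sub_mulVec, dotProduct_sub, smul_mulVec, dotProduct_smul, h3]
  simp [Complex.normSq_eq_conj_mul_self, Complex.mul_re, Complex.ofReal_re, Complex.ofReal_im]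
  ring_nf
  simp [Complex.normSq, Complex.mul_re]
  ring

/-! ## Real analysis part -/

section RealPart

open Real Set

variable {ρ : ℝ → ℝ}

lemma phi_mono (hmono : MonotoneOn ρ (Set.Ici 0)) : Monotone (fun x => ρ (Real.exp x)) :=
  fun x y hxy => hmono (le_of_lt (Real.exp_pos x)) (le_of_lt (Real.exp_pos y))
    (Real.exp_le_exp.2 hxy)

lemma phi_strictMono (hmono : MonotoneOn ρ (Set.Ici 0))
    (hstrict : StrictConvexOn ℝ Set.univ (fun x => ρ (Real.exp x))) :
    StrictMono (fun x => ρ (Real.exp x)) := by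
  intro x y hxy
  rcases lt_or_eq_of_le (phi_mono hmono hxy.le) with h | h
  · exact h
  exfalso
  have hmid := hstrict.2 (Set.mem_univ x) (Set.mem_univ y) hxy.ne
    (by norm_num : (0:ℝ) < 1/2) (by norm_num : (0:ℝ) < 1/2) (by norm_num)
  simp only [smul_eq_mul] at hmid
  have h' : ρ (Real.exp x) = ρ (Real.exp y) := h
  have hle : ρ (Real.exp x) ≤ ρ (Real.exp ((1/2:ℝ) * x + (1/2:ℝ) * y)) :=
    phi_mono hmono (show x ≤ (1/2:ℝ) * x + (1/2:ℝ) * y by linarith)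
  linarith

lemma amgm_strict {p q t s : ℝ} (hp : 0 < p) (hq : 0 < q) (hpq : p ≠ q)
    (ht : 0 < t) (hs : 0 < s) (hts : t + s = 1) :
    p ^ t * q ^ s < t * p + s * q := by
  have hlog := strictConcaveOn_log_Ioi.2 (Set.mem_Ioi.2 hp) (Set.mem_Ioi.2 hq) hpq ht hs hts
  simp only [smul_eq_mul] at hlog
  have hpos : 0 < t * p + s * q := by positivity
  calc p ^ t * q ^ s = Real.exp (t * Real.log p + s * Real.log q) := by
        rw [Real.exp_add, Real.rpow_def_of_pos hp, Real.rpow_def_of_pos hq]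
        ring_nf
    _ < Real.exp (Real.log (t * p + s * q)) := Real.exp_lt_exp.2 hlog
    _ = t * p + s * q := Real.exp_log hpos

lemma amgm_le {p q t s : ℝ} (hp : 0 ≤ p) (hq : 0 ≤ q)
    (ht : 0 ≤ t) (hs : 0 ≤ s) (hts : t + s = 1) :
    p ^ t * q ^ s ≤ t * p + s * q :=
  Real.geom_mean_le_arith_mean2_weighted ht hs hp hq hts

/-- key strict inequality: for `α > 0`, `β > 0`, `u ≠ v`. -/
lemma key_lt {α β u v t s : ℝ} (hα : 0 < α) (hβ : 0 < β) (huv : u ≠ v)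
    (ht : 0 < t) (hs : 0 < s) (hts : t + s = 1) :
    α + β * Real.exp (-(t*u+s*v)) <
      (α + β * Real.exp (-u)) ^ t * (α + β * Real.exp (-v)) ^ s := by
  set A := α + β * Real.exp (-u) with hA
  set B := α + β * Real.exp (-v) with hB
  have hA0 : 0 < A := by positivity
  have hB0 : 0 < B := by positivity
  have hAB : A ≠ B := by
    intro h
    apply huv
    have h2 : β * Real.exp (-u) = β * Real.exp (-v) := by
      rw [hA] at h; rw [hB] at h; linarith
    have h3 := mul_left_cancel₀ hβ.ne' h2
    have h4 := Real.exp_injective h3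
    linarith
  have h1 : (α/A) ^ t * (α/B) ^ s < t * (α/A) + s * (α/B) := by
    apply amgm_strict (by positivity) (by positivity) ?_ ht hs hts
    intro h
    rw [div_eq_div_iff hA0.ne' hB0.ne'] at h
    exact hAB (mul_left_cancel₀ hα.ne' h).symm
  have h2 : ((β * Real.exp (-u))/A) ^ t * ((β * Real.exp (-v))/B) ^ s ≤
      t * ((β * Real.exp (-u))/A) + s * ((β * Real.exp (-v))/B) :=
    amgm_le (by positivity) (by positivity) ht.le hs.le hts
  have hsum : (α/A) ^ t * (α/B) ^ s +
      ((β * Real.exp (-u))/A) ^ t * ((β * Real.exp (-v))/B) ^ s < 1 := by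
    have heq : t * (α/A) + s * (α/B) + (t * ((β * Real.exp (-u))/A) +
        s * ((β * Real.exp (-v))/B)) = t + s := by
      field_simp
      ring
    nlinarith [h1, h2]
  have hP : 0 < A ^ t * B ^ s := by positivity
  have e1 : (α/A) ^ t * (α/B) ^ s = (α ^ t * α ^ s)/(A ^ t * B ^ s) := by
    rw [Real.div_rpow hα.le hA0.le, Real.div_rpow hα.le hB0.le]
    ring
  have e2 : ((β * Real.exp (-u))/A) ^ t * ((β * Real.exp (-v))/B) ^ s =
      ((β * Real.exp (-u)) ^ t * (β * Real.exp (-v)) ^ s)/(A ^ t * B ^ s) := by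
    rw [Real.div_rpow (by positivity) hA0.le, Real.div_rpow (by positivity) hB0.le]
    ring
  rw [e1, e2, ← add_div, div_lt_one hP] at hsum
  have eα : α ^ t * α ^ s = α := by
    rw [← Real.rpow_add hα, hts, Real.rpow_one]
  have eβ : (β * Real.exp (-u)) ^ t * (β * Real.exp (-v)) ^ s
      = β * Real.exp (-(t*u+s*v)) := by
    rw [Real.mul_rpow hβ.le (Real.exp_pos _).le, Real.mul_rpow hβ.le (Real.exp_pos _).le,
      ← Real.exp_mul, ← Real.exp_mul]
    have : β ^ t * β ^ s = β := by rw [← Real.rpow_add hβ, hts, Real.rpow_one]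
    calc β ^ t * Real.exp (-u * t) * (β ^ s * Real.exp (-v * s))
        = (β ^ t * β ^ s) * (Real.exp (-u * t) * Real.exp (-v * s)) := by ring
      _ = β * Real.exp (-(t*u+s*v)) := by
          rw [this, ← Real.exp_add]
          congr 1
          ring
  rw [eα, eβ] at hsum
  exact hsum

lemma term_strict (hmono : MonotoneOn ρ (Set.Ici 0))
    (hgeo : ConvexOn ℝ Set.univ (fun x => ρ (Real.exp x)))
    (hstrict : StrictConvexOn ℝ Set.univ (fun x => ρ (Real.exp x)))
    {α β : ℝ} (hα : 0 ≤ α) (hβ : 0 < β) :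
    StrictConvexOn ℝ Set.univ (fun u => ρ (α + β * Real.exp (-u))) := by
  constructor
  · exact convex_univ
  intro x _ y _ hxy t s ht hs hts
  simp only [smul_eq_mul]
  rcases eq_or_lt_of_le hα with hα0 | hα0
  · -- α = 0 : affine composition
    have harg : ∀ w : ℝ, α + β * Real.exp (-w) = Real.exp (Real.log β - w) := by
      intro w
      rw [← hα0, Real.exp_sub, Real.exp_log hβ, Real.exp_neg]
      ring
    have hne2 : Real.log β - x ≠ Real.log β - y := fun h => hxy (by linarith)
    have hmid := hstrict.2 (Set.mem_univ (Real.log β - x)) (Set.mem_univ (Real.log β - y))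
      hne2 ht hs hts
    simp only [smul_eq_mul] at hmid
    have he : Real.log β - (t*x+s*y) = t * (Real.log β - x) + s * (Real.log β - y) := by
      have : t * Real.log β + s * Real.log β = Real.log β := by
        rw [← add_mul, hts, one_mul]
      linarith [this]
    rw [harg, harg, harg, he]
    exact hmid
  · -- α > 0
    set A := α + β * Real.exp (-x) with hA
    set B := α + β * Real.exp (-y) with hB
    have hA0 : 0 < A := by positivity
    have hB0 : 0 < B := by positivity
    have harg0 : 0 < α + β * Real.exp (-(t*x+s*y)) := by positivity
    have hkey := key_lt hα0 hβ hxy ht hs hts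
    have hlog : Real.log (α + β * Real.exp (-(t*x+s*y))) < t * Real.log A + s * Real.log B := by
      calc Real.log (α + β * Real.exp (-(t*x+s*y))) < Real.log (A ^ t * B ^ s) :=
            Real.log_lt_log harg0 hkey
        _ = t * Real.log A + s * Real.log B := by
            rw [Real.log_mul (by positivity) (by positivity), Real.log_rpow hA0,
              Real.log_rpow hB0]
    have hmono' := phi_strictMono hmono hstrict hlog
    have hconv := hgeo.2 (Set.mem_univ (Real.log A)) (Set.mem_univ (Real.log B)) ht.le hs.le hts
    simp only [smul_eq_mul] at hmono' hconv
    calc ρ (α + β * Real.exp (-(t*x+s*y)))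
        = ρ (Real.exp (Real.log (α + β * Real.exp (-(t*x+s*y))))) := by
          rw [Real.exp_log harg0]
      _ < ρ (Real.exp (t * Real.log A + s * Real.log B)) := hmono'
      _ ≤ t * ρ (Real.exp (Real.log A)) + s * ρ (Real.exp (Real.log B)) := hconv
      _ = t * ρ A + s * ρ B := by rw [Real.exp_log hA0, Real.exp_log hB0]

lemma term_convex (hmono : MonotoneOn ρ (Set.Ici 0))
    (hgeo : ConvexOn ℝ Set.univ (fun x => ρ (Real.exp x)))
    (hstrict : StrictConvexOn ℝ Set.univ (fun x => ρ (Real.exp x)))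
    {α β : ℝ} (hα : 0 ≤ α) (hβ : 0 ≤ β) :
    ConvexOn ℝ Set.univ (fun u => ρ (α + β * Real.exp (-u))) := by
  rcases eq_or_lt_of_le hβ with hβ0 | hβ0
  · have : (fun u : ℝ => ρ (α + β * Real.exp (-u))) = fun _ => ρ α := by
      funext u
      rw [← hβ0]
      ring_nf
    rw [this]
    exact convexOn_const _ convex_univ
  · exact (term_strict hmono hgeo hstrict hα hβ0).convexOn

lemma exists_unique_min {f : ℝ → ℝ} (hf : Continuous f)
    (hsc : StrictConvexOn ℝ Set.univ f) {r : ℝ} (hcoer : ∀ u, r + u ≤ f u) :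
    ∃! u : ℝ, 0 ≤ u ∧ ∀ v ≥ (0:ℝ), f u ≤ f v := by
  set U := max 0 (f 0 - r) + 1 with hU
  have hU0 : (0:ℝ) ≤ U := by positivity
  obtain ⟨u, humem, hmin⟩ := isCompact_Icc.exists_isMinOn (Set.nonempty_Icc.2 hU0)
    hf.continuousOn
  have hmin' : ∀ v ∈ Set.Icc (0:ℝ) U, f u ≤ f v := fun v hv => hmin hv
  have hglobal : ∀ v ≥ (0:ℝ), f u ≤ f v := by
    intro v hv
    by_cases hvU : v ≤ U
    · exact hmin' v ⟨hv, hvU⟩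
    · push_neg at hvU
      have h1 : f 0 < f v := by
        have h2 := hcoer v
        have h3 : max 0 (f 0 - r) ≥ f 0 - r := le_max_right _ _
        nlinarith [hvU, h2, h3]
      exact le_trans (hmin' 0 ⟨le_refl 0, hU0⟩) h1.le
  refine ⟨u, ⟨humem.1, hglobal⟩, ?_⟩
  rintro w ⟨hw0, hwmin⟩
  by_contra hne
  have heq : f w = f u := le_antisymm (hwmin u humem.1) (hglobal w hw0)
  have hmid := hsc.2 (Set.mem_univ w) (Set.mem_univ u) hne
    (by norm_num : (0:ℝ) < 1/2) (by norm_num : (0:ℝ) < 1/2) (by norm_num)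
  simp only [smul_eq_mul, heq] at hmid
  have hmidpos : (0:ℝ) ≤ (1/2:ℝ) * w + (1/2:ℝ) * u := by
    have := humem.1
    positivity
  have := hglobal _ hmidpos
  linarith

lemma transfer {c : ℝ} (hc : 0 < c) {g F : ℝ → ℝ}
    (h : ∀ γ ≥ (0:ℝ), g γ = F (Real.log (1 + γ * c)))
    (hF : ∃! u : ℝ, 0 ≤ u ∧ ∀ v ≥ (0:ℝ), F u ≤ F v) :
    ∃! γ : ℝ, 0 ≤ γ ∧ ∀ γ' ≥ (0:ℝ), g γ ≤ g γ' := by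
  obtain ⟨u, ⟨hu0, humin⟩, huniq⟩ := hF
  have hmem : ∀ γ ≥ (0:ℝ), 0 ≤ Real.log (1 + γ * c) := by
    intro γ hγ
    apply Real.log_nonneg
    nlinarith
  have hepos : ∀ γ ≥ (0:ℝ), (0:ℝ) < 1 + γ * c := by
    intro γ hγ; nlinarith
  have hinj : ∀ γ₁ ≥ (0:ℝ), ∀ γ₂ ≥ (0:ℝ),
      Real.log (1 + γ₁ * c) = Real.log (1 + γ₂ * c) → γ₁ = γ₂ := by
    intro γ₁ h1 γ₂ h2 heq
    have := congrArg Real.exp heq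
    rw [Real.exp_log (hepos _ h1), Real.exp_log (hepos _ h2)] at this
    have : γ₁ * c = γ₂ * c := by linarith
    exact mul_right_cancel₀ hc.ne' this
  have hsurj : ∀ v ≥ (0:ℝ), ∃ γ ≥ (0:ℝ), Real.log (1 + γ * c) = v := by
    intro v hv
    refine ⟨(Real.exp v - 1)/c, ?_, ?_⟩
    · have h1 := Real.one_le_exp hv
      have h2 : 0 ≤ Real.exp v - 1 := by linarith
      positivity
    · have h1 : 1 + (Real.exp v - 1)/c * c = Real.exp v := by field_simp; ring
      rw [h1, Real.log_exp]
  obtain ⟨γu, hγu0, hγueq⟩ := hsurj u hu0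
  refine ⟨γu, ⟨hγu0, ?_⟩, ?_⟩
  · intro γ' hγ'
    rw [h γu hγu0, h γ' hγ', hγueq]
    exact humin _ (hmem γ' hγ')
  · rintro γ' ⟨hγ'0, hγ'min⟩
    have hkey : Real.log (1 + γ' * c) = u := by
      apply huniq
      refine ⟨hmem γ' hγ'0, ?_⟩
      intro v hv
      obtain ⟨γv, hγv0, hγveq⟩ := hsurj v hv
      rw [← hγveq, ← h γ' hγ'0, ← h γv hγv0]
      exact hγ'min γv hγv0
    exact hinj γ' hγ'0 γu hγu0 (hkey.trans hγueq.symm)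

end RealPart

theorem stmt3 (L M : ℕ) (hL : 0 < L) (hM : 0 < M)
    (S0 : Matrix (Fin L) (Fin L) ℂ) (hS0 : S0.PosDef)
    (a : Fin L → ℂ) (y : Fin M → Fin L → ℂ) (b : ℝ) (hb : 0 < b)
    (ρ : ℝ → ℝ)
    (hmono : MonotoneOn ρ (Set.Ici 0))
    (hdiff : ∀ t > (0 : ℝ), DifferentiableAt ℝ ρ t)
    (hderiv : ∀ t > (0 : ℝ), 0 ≤ deriv ρ t)
    (hgeo : ConvexOn ℝ Set.univ (fun x => ρ (Real.exp x)))
    (hbdd : ∃ r : ℝ, ∀ t ≥ (0 : ℝ), r ≤ ρ t)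
    (hcont : ContinuousOn ρ (Set.Ici 0))
    (ha : a ≠ 0)
    (hstrict : StrictConvexOn ℝ Set.univ (fun x => ρ (Real.exp x))) :
    ∃! γstar : ℝ, 0 ≤ γstar ∧ ∀ γ ≥ (0 : ℝ), obj S0 a y b ρ γstar ≤ obj S0 a y b ρ γ := by
  classical
  set c : ℝ := (star a ⬝ᵥ S0⁻¹ *ᵥ a).re with hcdef
  have hc : 0 < c := creal_pos hS0 ha
  set T : Fin M → ℝ := fun m => (star (y m) ⬝ᵥ S0⁻¹ *ᵥ (y m)).re with hTdef
  set D : Fin M → ℝ := fun m => Complex.normSq (star a ⬝ᵥ S0⁻¹ *ᵥ (y m)) with hDdef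
  set β : Fin M → ℝ := fun m => D m / c with hβdef
  set α : Fin M → ℝ := fun m => T m - β m with hαdef
  have hβ0 : ∀ m, 0 ≤ β m := fun m => div_nonneg (by rw [hDdef]; exact Complex.normSq_nonneg _) hc.le
  set K : ℝ := 1/(b * M) with hKdef
  have hMR : (0:ℝ) < (M:ℝ) := by exact_mod_cast hM
  have hK0 : 0 < K := by rw [hKdef]; positivity
  set dlog : ℝ := Real.log (S0.det.re) with hdlogdef
  set F : ℝ → ℝ := fun u => K * ∑ m, ρ (α m + β m * Real.exp (-u)) + (u + dlog) with hFdef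
  -- mdist in closed form
  have hmd : ∀ γ ≥ (0:ℝ), ∀ m, mdist S0 a (y m) γ
      = α m + β m * Real.exp (-(Real.log (1 + γ * c))) := by
    intro γ hγ m
    have h1 : (0:ℝ) < 1 + γ * c := by nlinarith
    have hDm : Complex.normSq (star a ⬝ᵥ S0⁻¹ *ᵥ y m) = D m := rfl
    have hTm : (star (y m) ⬝ᵥ S0⁻¹ *ᵥ y m).re = T m := rfl
    have hcm : (star a ⬝ᵥ S0⁻¹ *ᵥ a).re = c := rfl
    rw [mdist_eq hS0 (y m) hγ, Real.exp_neg, Real.exp_log h1, hDm, hTm, hcm]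
    simp only [hαdef, hβdef]
    field_simp
    ring
  -- determinant in closed form
  have hC : star a ⬝ᵥ S0⁻¹ *ᵥ a = (c:ℂ) := herm_dot_real hS0.inv.isHermitian a
  have hdetpos : 0 < S0.det.re := by
    have h := hS0.det_pos
    rw [Complex.lt_def] at h
    exact h.1
  have hdet : ∀ γ ≥ (0:ℝ), Real.log ((Sig S0 a γ).det.re) = Real.log (1 + γ * c) + dlog := by
    intro γ hγ
    have h1 : (0:ℝ) < 1 + γ * c := by nlinarith
    have h3 : (Sig S0 a γ).det.re = S0.det.re * (1 + γ * c) := by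
      rw [sig_det hS0 γ, hC]
      have h4 : (1 + (γ:ℂ) * (c:ℂ)) = ((1 + γ * c : ℝ) : ℂ) := by push_cast; ring
      rw [h4, Complex.mul_re, Complex.ofReal_re, Complex.ofReal_im, mul_zero, sub_zero]
    rw [h3, Real.log_mul hdetpos.ne' h1.ne', hdlogdef, add_comm]
  -- objective in closed form
  have hobj : ∀ γ ≥ (0:ℝ), obj S0 a y b ρ γ = F (Real.log (1 + γ * c)) := by
    intro γ hγ
    rw [obj, hdet γ hγ, hFdef]
    simp only
    rw [Finset.sum_congr rfl (fun m _ => by rw [hmd γ hγ m])]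
  -- nonnegativity of mdist and of α
  have hmd0 : ∀ γ ≥ (0:ℝ), ∀ m, 0 ≤ mdist S0 a (y m) γ := by
    intro γ hγ m
    have := (sig_posDef (a := a) hS0 hγ).inv.posSemidef.re_dotProduct_nonneg (y m)
    simpa [mdist] using this
  have hα0 : ∀ m, 0 ≤ α m := by
    intro m
    have hterm : ∀ n : ℕ, 0 ≤ α m + β m * Real.exp (-(n:ℝ)) := by
      intro n
      set γn := (Real.exp (n:ℝ) - 1)/c with hγn
      have hexp1 : (1:ℝ) ≤ Real.exp (n:ℝ) := Real.one_le_exp (n.cast_nonneg)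
      have hγn0 : 0 ≤ γn := div_nonneg (by linarith) hc.le
      have hlogn : Real.log (1 + γn * c) = (n:ℝ) := by
        have h5 : 1 + γn * c = Real.exp (n:ℝ) := by rw [hγn]; field_simp; ring
        rw [h5, Real.log_exp]
      have h6 := hmd γn hγn0 m
      rw [hlogn] at h6
      rw [← h6]
      exact hmd0 γn hγn0 m
    have htend : Filter.Tendsto (fun n : ℕ => α m + β m * Real.exp (-(n:ℝ)))
        Filter.atTop (nhds (α m)) := by
      have h1 : Filter.Tendsto (fun n : ℕ => Real.exp (-(n:ℝ))) Filter.atTop (nhds 0) :=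
        Real.tendsto_exp_neg_atTop_nhds_zero.comp tendsto_natCast_atTop_atTop
      have h2 := h1.const_mul (β m)
      have h3 := h2.const_add (α m)
      simpa using h3
    exact ge_of_tendsto' htend hterm
  -- continuity of F
  have hFcont : Continuous F := by
    rw [hFdef]
    apply Continuous.add
    · apply Continuous.mul continuous_const
      apply continuous_finset_sum
      intro m _
      have harg : Continuous fun u : ℝ => α m + β m * Real.exp (-u) :=
        continuous_const.add (continuous_const.mul (Real.continuous_exp.comp continuous_neg))
      exact hcont.comp_continuous harg (fun u => by
        have h1 := hα0 m
        have h2 := hβ0 m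
        have : (0:ℝ) ≤ α m + β m * Real.exp (-u) := by positivity
        exact this)
    · exact continuous_id.add continuous_const
  -- coercivity of F
  obtain ⟨r, hr⟩ := hbdd
  have hcoer : ∀ u, (K * ((M:ℝ) * r) + dlog) + u ≤ F u := by
    intro u
    have hsum : (M:ℝ) * r ≤ ∑ m, ρ (α m + β m * Real.exp (-u)) := by
      have h1 : ∑ _m : Fin M, r = (M:ℝ) * r := by
        rw [Finset.sum_const, Finset.card_univ, Fintype.card_fin, nsmul_eq_mul]
      rw [← h1]
      apply Finset.sum_le_sum
      intro m _
      apply hr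
      have h2 := hα0 m
      have h3 := hβ0 m
      positivity
    have h4 := mul_le_mul_of_nonneg_left hsum hK0.le
    rw [hFdef]
    simp only
    linarith
  -- case split on whether any β is positive
  by_cases hall : ∀ m, β m = 0
  · -- all β zero: F is a constant plus u
    apply transfer hc hobj
    have hconst : ∀ u, F u = K * ∑ m, ρ (α m) + (u + dlog) := by
      intro u
      rw [hFdef]
      simp only
      congr 2
      apply Finset.sum_congr rfl
      intro m _
      rw [hall m]
      ring_nf
    refine ⟨0, ⟨le_refl 0, ?_⟩, ?_⟩
    · intro v hv
      rw [hconst, hconst]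
      linarith
    · rintro w ⟨hw0, hwmin⟩
      have h1 := hwmin 0 (le_refl 0)
      rw [hconst, hconst] at h1
      linarith
  · push_neg at hall
    obtain ⟨m0, hm0⟩ := hall
    have hβm0 : 0 < β m0 := (hβ0 m0).lt_of_ne (Ne.symm hm0)
    have hFsc : StrictConvexOn ℝ Set.univ F := by
      constructor
      · exact convex_univ
      intro x _ y' _ hxy t s ht hs hts
      simp only [smul_eq_mul, hFdef]
      have hterm_le : ∀ m, ρ (α m + β m * Real.exp (-(t*x+s*y')))
          ≤ t * ρ (α m + β m * Real.exp (-x)) + s * ρ (α m + β m * Real.exp (-y')) := by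
        intro m
        have h0 := (term_convex hmono hgeo hstrict (hα0 m) (hβ0 m)).2
          (Set.mem_univ x) (Set.mem_univ y') ht.le hs.le hts
        simpa [smul_eq_mul] using h0
      have hterm_lt : ρ (α m0 + β m0 * Real.exp (-(t*x+s*y')))
          < t * ρ (α m0 + β m0 * Real.exp (-x)) + s * ρ (α m0 + β m0 * Real.exp (-y')) := by
        have h0 := (term_strict hmono hgeo hstrict (hα0 m0) hβm0).2
          (Set.mem_univ x) (Set.mem_univ y') hxy ht hs hts
        simpa [smul_eq_mul] using h0
      have hsum_lt : ∑ m, ρ (α m + β m * Real.exp (-(t*x+s*y')))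
          < ∑ m, (t * ρ (α m + β m * Real.exp (-x)) + s * ρ (α m + β m * Real.exp (-y'))) :=
        Finset.sum_lt_sum (fun m _ => hterm_le m) ⟨m0, Finset.mem_univ m0, hterm_lt⟩
      rw [Finset.sum_add_distrib, ← Finset.mul_sum, ← Finset.mul_sum] at hsum_lt
      have hKlt := mul_lt_mul_of_pos_left hsum_lt hK0
      rw [mul_add] at hKlt
      rw [mul_left_comm K t, mul_left_comm K s] at hKlt
      have hd : t*dlog + s*dlog = dlog := by rw [← add_mul, hts, one_mul]
      linarith [hKlt, hd]
    exact transfer hc hobj (exists_unique_min hFcont hFsc hcoer)
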